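/- For every x ∈ ℝ, the derivative of the function x ↦ (e^x + c_b)/F(x) satisfies ((e^x + c_b)/F(x))' = (W(x)/F(x)²)·∫_{−∞}^x Ψ(s)·e^s·f_b(s) ds, where the integral converges. -/

import Mathlib

/-!
Write `J_q(a) = ∫₀^∞ u^q e^{au - u²/2} du`. With `k = √(2μ/σ²)` and `p = r/μ - 1` we have
`F(x) = J_p(k(x - θ))` and `G(x) = J_p(-k(x - θ))`. Differentiating under the integral gives
`J_q' = J_{q+1}`, and integration by parts gives `J_{q+2} = (q+1) J_q + a J_{q+1}`, so `F` and `G`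
solve `(σ²/2) y'' + μ(θ - x) y' = r y`; by Abel's identity `W' = (2μ/σ²)(x - θ) W`.
A direct computation then shows that `g = (eˣ F - (eˣ + c_b) F') / W` is an antiderivative of
`Ψ eˣ f_b`, while `((eˣ + c_b)/F)' = W g / F²`. At `-∞`, `F` and `F'` tend to `0` and `W` is
bounded below by `W(θ)`, so `g → 0` and `∫_{-∞}^x Ψ eˢ f_b = g(x)`. The integral converges
absolutely because `eˢ f_b(s) → -r c_b < 0`, so the integrand has a sign near `-∞`.
-/

open Real MeasureTheory Set Filter Topology

noncomputable def tiltedGaussianMoment (q a : ℝ) : ℝ :=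
  ∫ u in Ioi 0, u ^ q * exp (a * u - u ^ 2 / 2)

namespace tiltedGaussianMoment

variable {q : ℝ}

lemma continuousOn_integrand (q a : ℝ) :
    ContinuousOn (fun u : ℝ => u ^ q * exp (a * u - u ^ 2 / 2)) (Ioi 0) :=
  (continuousOn_id.rpow_const fun u hu => Or.inl (ne_of_gt hu)).mul (by fun_prop)

lemma integrand_pos (q a : ℝ) {u : ℝ} (hu : 0 < u) : 0 < u ^ q * exp (a * u - u ^ 2 / 2) :=
  mul_pos (rpow_pos_of_pos hu q) (exp_pos _)

lemma exp_mul_sub_sq_le (a u : ℝ) : exp (a * u - u ^ 2 / 2) ≤ exp ((a + 1) ^ 2 / 2) * exp (-u) := by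
  rw [← exp_add]
  exact exp_le_exp.2 (by nlinarith [sq_nonneg (u - (a + 1))])

lemma integrableOn (hq : -1 < q) (a : ℝ) :
    IntegrableOn (fun u : ℝ => u ^ q * exp (a * u - u ^ 2 / 2)) (Ioi 0) := by
  have hGamma : IntegrableOn (fun u : ℝ => exp ((a + 1) ^ 2 / 2) * (exp (-u) * u ^ (q + 1 - 1)))
      (Ioi 0) := (GammaIntegral_convergent (by linarith)).const_mul _
  refine hGamma.mono' ((continuousOn_integrand q a).aestronglyMeasurable measurableSet_Ioi) ?_
  filter_upwards [ae_restrict_mem measurableSet_Ioi] with u (hu : 0 < u)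
  rw [norm_of_nonneg (integrand_pos q a hu).le, add_sub_cancel_right]
  calc u ^ q * exp (a * u - u ^ 2 / 2) ≤ u ^ q * (exp ((a + 1) ^ 2 / 2) * exp (-u)) :=
        mul_le_mul_of_nonneg_left (exp_mul_sub_sq_le a u) (rpow_nonneg hu.le q)
    _ = _ := by ring

lemma pos (hq : -1 < q) (a : ℝ) : 0 < tiltedGaussianMoment q a := by
  refine (setIntegral_pos_iff_support_of_nonneg_ae ?_ (integrableOn hq a)).2 ?_
  · filter_upwards [ae_restrict_mem measurableSet_Ioi] with u (hu : 0 < u)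
    exact (integrand_pos q a hu).le
  · have hsupp : Ioi (0 : ℝ) ⊆ Function.support fun u : ℝ => u ^ q * exp (a * u - u ^ 2 / 2) :=
      fun u hu => (integrand_pos q a hu).ne'
    rw [inter_eq_right.2 hsupp]
    simp

lemma hasDerivAt (hq : -1 < q) (a : ℝ) :
    HasDerivAt (tiltedGaussianMoment q) (tiltedGaussianMoment (q + 1) a) a := by
  have hq1 : -1 < q + 1 := by linarith
  refine (hasDerivAt_integral_of_dominated_loc_of_deriv_le
    (F' := fun x u => u ^ (q + 1) * exp (x * u - u ^ 2 / 2))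
    (bound := fun u => u ^ (q + 1) * exp ((|a| + 1) * u - u ^ 2 / 2))
    (Metric.ball_mem_nhds a one_pos)
    (.of_forall fun x => (continuousOn_integrand q x).aestronglyMeasurable measurableSet_Ioi)
    (integrableOn hq a) ((continuousOn_integrand _ a).aestronglyMeasurable measurableSet_Ioi)
    ?_ (integrableOn hq1 (|a| + 1)) ?_).2
  · filter_upwards [ae_restrict_mem measurableSet_Ioi] with u (hu : 0 < u) x hx
    rw [norm_of_nonneg (integrand_pos _ x hu).le]
    have hxa : x ≤ |a| + 1 := by
      have := (abs_lt.1 (mem_ball_iff_norm.1 hx)).2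
      linarith [le_abs_self a]
    gcongr
  · filter_upwards [ae_restrict_mem measurableSet_Ioi] with u (hu : 0 < u) x _
    have := (((hasDerivAt_id x).mul_const u).sub_const (u ^ 2 / 2)).exp.const_mul (u ^ q)
    refine this.congr_deriv ?_
    rw [rpow_add_one hu.ne', id]
    ring

lemma tendsto_atBot (hq : -1 < q) : Tendsto (tiltedGaussianMoment q) atBot (𝓝 0) := by
  have hlim := tendsto_integral_filter_of_dominated_convergence (μ := volume.restrict (Ioi 0))
    (l := atBot) (F := fun x u => u ^ q * exp (x * u - u ^ 2 / 2)) (f := fun _ => 0)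
    (bound := fun u => u ^ q * exp (0 * u - u ^ 2 / 2))
    (.of_forall fun x => (continuousOn_integrand q x).aestronglyMeasurable measurableSet_Ioi)
    ?_ (integrableOn hq 0) ?_
  · rwa [integral_zero] at hlim
  · filter_upwards [eventually_le_atBot 0] with x hx
    filter_upwards [ae_restrict_mem measurableSet_Ioi] with u (hu : 0 < u)
    rw [norm_of_nonneg (integrand_pos q x hu).le]
    gcongr
  · filter_upwards [ae_restrict_mem measurableSet_Ioi] with u (hu : 0 < u)
    have hexp : Tendsto (fun x => x * u - u ^ 2 / 2) atBot atBot :=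
      tendsto_atBot_add_const_right _ _ (tendsto_id.atBot_mul_const hu)
    simpa using (tendsto_exp_atBot.comp hexp).const_mul (u ^ q)

lemma tendsto_integrand_atTop (q a : ℝ) :
    Tendsto (fun u : ℝ => u ^ q * exp (a * u - u ^ 2 / 2)) atTop (𝓝 0) := by
  have hdom := (tendsto_rpow_mul_exp_neg_mul_atTop_nhds_zero q 1 one_pos).const_mul
    (exp ((a + 1) ^ 2 / 2))
  rw [mul_zero] at hdom
  refine squeeze_zero' ?_ ?_ hdom
  · filter_upwards [eventually_gt_atTop 0] with u hu using (integrand_pos q a hu).le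
  · filter_upwards [eventually_gt_atTop 0] with u hu
    calc u ^ q * exp (a * u - u ^ 2 / 2) ≤ u ^ q * (exp ((a + 1) ^ 2 / 2) * exp (-u)) :=
          mul_le_mul_of_nonneg_left (exp_mul_sub_sq_le a u) (rpow_nonneg hu.le q)
      _ = _ := by ring_nf

lemma hasDerivAt_integrand_succ {u : ℝ} (hu : 0 < u) (a : ℝ) :
    HasDerivAt (fun u : ℝ => u ^ (q + 1) * exp (a * u - u ^ 2 / 2))
      ((q + 1) * (u ^ q * exp (a * u - u ^ 2 / 2)) + a * (u ^ (q + 1) * exp (a * u - u ^ 2 / 2))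
        - u ^ (q + 2) * exp (a * u - u ^ 2 / 2)) u := by
  have hpow := hasDerivAt_rpow_const (p := q + 1) (Or.inl hu.ne')
  have hinner : HasDerivAt (fun u : ℝ => a * u - u ^ 2 / 2) (a - u) u := by
    simpa using ((hasDerivAt_id u).const_mul a).fun_sub ((hasDerivAt_pow 2 u).div_const 2)
  refine (hpow.mul hinner.exp).congr_deriv ?_
  rw [show q + 2 = q + 1 + 1 by ring, rpow_add_one hu.ne' (q + 1), rpow_add_one hu.ne' q,
    add_sub_cancel_right]
  ring

/-- Integration by parts against `d/du (u ^ (q + 1) * exp (a * u - u ^ 2 / 2))`. -/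
lemma add_two (hq : -1 < q) (a : ℝ) :
    tiltedGaussianMoment (q + 2) a
      = (q + 1) * tiltedGaussianMoment q a + a * tiltedGaussianMoment (q + 1) a := by
  have hq0 : 0 < q + 1 := by linarith
  have hI₀ := (integrableOn hq a).const_mul (q + 1)
  have hI₁ := (integrableOn (by linarith : -1 < q + 1) a).const_mul a
  have hI₀₁ : IntegrableOn (fun u : ℝ => (q + 1) * (u ^ q * exp (a * u - u ^ 2 / 2))
      + a * (u ^ (q + 1) * exp (a * u - u ^ 2 / 2))) (Ioi 0) := hI₀.add hI₁
  have hI₂ := integrableOn (by linarith : -1 < q + 2) a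
  have hcont : ContinuousWithinAt (fun u : ℝ => u ^ (q + 1) * exp (a * u - u ^ 2 / 2)) (Ici 0) 0 :=
    ((continuousAt_rpow_const 0 (q + 1) (Or.inr hq0.le)).mul (by fun_prop)).continuousWithinAt
  have hparts := integral_Ioi_of_hasDerivAt_of_tendsto hcont
    (fun u hu => hasDerivAt_integrand_succ hu a) (hI₀₁.sub hI₂)
    (tendsto_integrand_atTop (q + 1) a)
  rw [integral_sub hI₀₁ hI₂, integral_add hI₀ hI₁, integral_const_mul,
    integral_const_mul, zero_rpow hq0.ne', zero_mul, sub_zero] at hparts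
  unfold tiltedGaussianMoment
  linarith

lemma hasDerivAt_comp_affine (hq : -1 < q) (m x₀ x : ℝ) :
    HasDerivAt (fun y => tiltedGaussianMoment q (m * (y - x₀)))
      (m * tiltedGaussianMoment (q + 1) (m * (x - x₀))) x := by
  have hlin : HasDerivAt (fun y => m * (y - x₀)) m x := by
    simpa using ((hasDerivAt_id x).sub_const x₀).const_mul m
  exact ((hasDerivAt hq _).comp x hlin).congr_deriv (mul_comm _ _)

lemma deriv_comp_affine (hq : -1 < q) (m x₀ : ℝ) :
    deriv (fun y => tiltedGaussianMoment q (m * (y - x₀)))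
      = fun x => m * tiltedGaussianMoment (q + 1) (m * (x - x₀)) :=
  funext fun x => (hasDerivAt_comp_affine hq m x₀ x).deriv

lemma hasDerivAt_deriv_comp_affine (hq : -1 < q) (m x₀ x : ℝ) :
    HasDerivAt (deriv fun y => tiltedGaussianMoment q (m * (y - x₀)))
      (m ^ 2 * (q + 1) * tiltedGaussianMoment q (m * (x - x₀))
        + m ^ 2 * (x - x₀) * deriv (fun y => tiltedGaussianMoment q (m * (y - x₀))) x) x := by
  rw [deriv_comp_affine hq]
  refine ((hasDerivAt_comp_affine (by linarith) m x₀ x).const_mul m).congr_deriv ?_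
  rw [add_assoc, one_add_one_eq_two, add_two hq]
  ring

lemma tendsto_comp_affine_atBot {m : ℝ} (hq : -1 < q) (hm : 0 < m)
    (x₀ : ℝ) : Tendsto (fun y => tiltedGaussianMoment q (m * (y - x₀))) atBot (𝓝 0) :=
  (tendsto_atBot hq).comp <|
    (tendsto_atBot_add_const_right _ _ tendsto_id).const_mul_atBot hm

lemma tendsto_deriv_comp_affine_atBot {m : ℝ} (hq : -1 < q) (hm : 0 < m) (x₀ : ℝ) :
    Tendsto (deriv fun y => tiltedGaussianMoment q (m * (y - x₀))) atBot (𝓝 0) := by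
  rw [deriv_comp_affine hq]
  simpa using (tendsto_comp_affine_atBot (q := q + 1) (by linarith) hm x₀).const_mul m

end tiltedGaussianMoment

/-- `F` solves `(σ² / 2) F'' + μ (θ - x) F' = r F`, the resolvent equation of the
Ornstein–Uhlenbeck generator. -/
def SolvesOUEquation (μ σ θ r : ℝ) (F : ℝ → ℝ) : Prop :=
  ∀ x, HasDerivAt F (deriv F x) x ∧
    HasDerivAt (deriv F) (2 * r / σ ^ 2 * F x + 2 * μ / σ ^ 2 * (x - θ) * deriv F x) x

lemma solvesOUEquation_tiltedGaussianMoment {μ σ θ r m : ℝ} (hμ : 0 < μ) (hr : 0 < r)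
    (hm : m ^ 2 = 2 * μ / σ ^ 2) :
    SolvesOUEquation μ σ θ r fun x => tiltedGaussianMoment (r / μ - 1) (m * (x - θ)) := by
  have hq : -1 < r / μ - 1 := by linarith [div_pos hr hμ]
  refine fun x =>
    ⟨(tiltedGaussianMoment.hasDerivAt_comp_affine hq m θ x).differentiableAt.hasDerivAt,
      (tiltedGaussianMoment.hasDerivAt_deriv_comp_affine hq m θ x).congr_deriv ?_⟩
  rw [hm, sub_add_cancel]
  field_simp

lemma hasDerivAt_wronskian {F G F' G' α β : ℝ → ℝ} {x : ℝ}
    (hF : HasDerivAt F (F' x) x) (hG : HasDerivAt G (G' x) x)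
    (hF' : HasDerivAt F' (α x * F x + β x * F' x) x)
    (hG' : HasDerivAt G' (α x * G x + β x * G' x) x) :
    HasDerivAt (fun y => F' y * G y - F y * G' y) (β x * (F' x * G x - F x * G' x)) x :=
  ((hF'.mul hG).sub (hF.mul hG')).congr_deriv (by ring)

namespace SolvesOUEquation

variable {μ σ θ r : ℝ} {F G : ℝ → ℝ}

lemma hasDerivAt_wronskian (hF : SolvesOUEquation μ σ θ r F) (hG : SolvesOUEquation μ σ θ r G)
    (x : ℝ) :
    HasDerivAt (fun y => deriv F y * G y - F y * deriv G y)
      (2 * μ / σ ^ 2 * (x - θ) * (deriv F x * G x - F x * deriv G x)) x :=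
  _root_.hasDerivAt_wronskian (α := fun _ => 2 * r / σ ^ 2) (β := fun x => 2 * μ / σ ^ 2 * (x - θ))
    (hF x).1 (hG x).1 (hF x).2 (hG x).2

lemma hasDerivAt_div_wronskian (hF : SolvesOUEquation μ σ θ r F) (hσ : σ ≠ 0) {W : ℝ → ℝ}
    {c x : ℝ} (hW : HasDerivAt W (2 * μ / σ ^ 2 * (x - θ) * W x) x) (hWx : W x ≠ 0) :
    HasDerivAt (fun y => (exp y * F y - (exp y + c) * deriv F y) / W y)
      (2 * F x / (σ ^ 2 * W x) * exp x
        * ((μ * θ + σ ^ 2 / 2 - r) - μ * x - r * c * exp (-x))) x := by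
  have hnum := ((hasDerivAt_exp x).mul (hF x).1).sub (((hasDerivAt_exp x).add_const c).mul (hF x).2)
  refine (hnum.div hW hWx).congr_deriv ?_
  simp only [Pi.sub_apply, Pi.mul_apply, exp_neg]
  field_simp
  ring

end SolvesOUEquation

lemma antitoneOn_Iic_of_hasDerivAt_eq_mul {W : ℝ → ℝ} {κ θ : ℝ} (hκ : 0 ≤ κ)
    (hW : ∀ x, HasDerivAt W (κ * (x - θ) * W x) x) (hpos : ∀ x, 0 < W x) :
    AntitoneOn W (Iic θ) := by
  refine antitoneOn_of_deriv_nonpos (convex_Iic θ)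
    (fun x _ => (hW x).continuousAt.continuousWithinAt)
    (fun x _ => (hW x).differentiableAt.differentiableWithinAt) fun x hx => ?_
  rw [interior_Iic] at hx
  rw [(hW x).deriv]
  exact mul_nonpos_of_nonpos_of_nonneg
    (mul_nonpos_of_nonneg_of_nonpos hκ (sub_nonpos.2 (le_of_lt hx))) (hpos x).le

lemma tendsto_div_of_antitoneOn_Iic {N W : ℝ → ℝ} {θ : ℝ} (hN : Tendsto N atBot (𝓝 0))
    (hW : AntitoneOn W (Iic θ)) (hWθ : 0 < W θ) : Tendsto (fun y => N y / W y) atBot (𝓝 0) := by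
  have hbound := (hN.norm.div_const (W θ))
  rw [norm_zero, zero_div] at hbound
  refine squeeze_zero_norm' ?_ hbound
  filter_upwards [eventually_le_atBot θ] with y hy
  have hWy : W θ ≤ W y := hW hy self_mem_Iic hy
  rw [norm_div, Real.norm_of_nonneg (hWθ.trans_le hWy).le]
  exact div_le_div_of_nonneg_left (norm_nonneg _) hWθ hWy

lemma integrableOn_Iic_deriv_of_nonpos {g g' : ℝ → ℝ} {a l : ℝ}
    (hderiv : ∀ x ∈ Iic a, HasDerivAt g (g' x) x) (hg' : ∀ x ∈ Iio a, g' x ≤ 0)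
    (hg : Tendsto g atBot (𝓝 l)) : IntegrableOn g' (Iic a) := by
  have hrefl : IntegrableOn (fun t => -g' (-t)) (Ioi (-a)) := by
    refine integrableOn_Ioi_deriv_of_nonneg' (g := fun t => g (-t)) (l := l) ?_ ?_ ?_
    · intro t (ht : -a ≤ t)
      exact ((hderiv (-t) (neg_le.1 ht)).comp t (hasDerivAt_neg t)).congr_deriv (mul_neg_one _)
    · intro t (ht : -a < t)
      simpa using hg' (-t) (neg_lt.1 ht)
    · exact hg.comp tendsto_neg_atTop_atBot
  rw [← (Measure.measurePreserving_neg volume).integrableOn_comp_preimage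
    (Homeomorph.neg ℝ).measurableEmbedding]
  rw [neg_preimage, neg_Iic, integrableOn_Ici_iff_integrableOn_Ioi]
  exact hrefl.neg.congr_fun (fun t _ => neg_neg _) measurableSet_Ioi

lemma integrableOn_Iic_of_hasDerivAt_of_eventually_nonpos {g g' : ℝ → ℝ} {l : ℝ}
    (hderiv : ∀ x, HasDerivAt g (g' x) x) (hcont : Continuous g')
    (hsign : ∀ᶠ x in atBot, g' x ≤ 0) (hg : Tendsto g atBot (𝓝 l)) (b : ℝ) :
    IntegrableOn g' (Iic b) := by
  obtain ⟨a, ha⟩ := eventually_atBot.1 hsign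
  rw [← Iic_union_Icc_eq_Iic (min_le_right a b)]
  exact (integrableOn_Iic_deriv_of_nonpos (fun x _ => hderiv x)
    (fun x hx => ha x (le_of_lt (lt_of_lt_of_le hx (min_le_left a b)))) hg).union
    (hcont.integrableOn_Icc)

lemma tendsto_exp_mul_affine_sub_exp_neg_atBot (A μ κ : ℝ) :
    Tendsto (fun s => exp s * (A - μ * s - κ * exp (-s))) atBot (𝓝 (-κ)) := by
  have hse : Tendsto (fun s => s * exp s) atBot (𝓝 0) := by
    have := (tendsto_pow_mul_exp_neg_atTop_nhds_zero 1).comp tendsto_neg_atBot_atTop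
    simpa [Function.comp_def] using this.neg
  have := ((tendsto_exp_atBot.const_mul A).sub (hse.const_mul μ)).sub_const κ
  refine (by simpa using this : Tendsto _ atBot (𝓝 (-κ))).congr fun s => ?_
  rw [exp_neg]
  field_simp

lemma integrableOn_Iic_mul_exp_mul_of_hasDerivAt {Ψ g : ℝ → ℝ} {A μ κ l : ℝ} (hκ : 0 < κ)
    (hΨ : Continuous Ψ) (hΨ₀ : ∀ x, 0 ≤ Ψ x)
    (hg : ∀ x, HasDerivAt g (Ψ x * exp x * (A - μ * x - κ * exp (-x))) x)
    (hg_atBot : Tendsto g atBot (𝓝 l)) (b : ℝ) :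
    IntegrableOn (fun s => Ψ s * exp s * (A - μ * s - κ * exp (-s))) (Iic b) := by
  refine integrableOn_Iic_of_hasDerivAt_of_eventually_nonpos hg (by fun_prop) ?_ hg_atBot b
  filter_upwards [(tendsto_exp_mul_affine_sub_exp_neg_atBot A μ κ).eventually
    (gt_mem_nhds (neg_lt_zero.2 hκ))] with s hs
  rw [mul_assoc]
  exact mul_nonpos_of_nonneg_of_nonpos (hΨ₀ s) hs.le

theorem SolvesOUEquation.integrableOn_Iic_and_hasDerivAt_exp_add_div {μ σ θ r c : ℝ}
    {F W Ψ f_b : ℝ → ℝ} (hF : SolvesOUEquation μ σ θ r F) (hμ : 0 ≤ μ) (hσ : σ ≠ 0)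
    (hrc : 0 < r * c) (hFpos : ∀ x, 0 < F x) (hF_atBot : Tendsto F atBot (𝓝 0))
    (hF'_atBot : Tendsto (deriv F) atBot (𝓝 0))
    (hW : ∀ x, HasDerivAt W (2 * μ / σ ^ 2 * (x - θ) * W x) x) (hWpos : ∀ x, 0 < W x)
    (hΨ : ∀ x, Ψ x = 2 * F x / (σ ^ 2 * W x))
    (hfb : ∀ x, f_b x = (μ * θ + σ ^ 2 / 2 - r) - μ * x - r * c * exp (-x)) :
    (∀ x, IntegrableOn (fun s => Ψ s * exp s * f_b s) (Iic x)) ∧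
    ∀ x, HasDerivAt (fun y => (exp y + c) / F y)
      (W x / F x ^ 2 * ∫ s in Iic x, Ψ s * exp s * f_b s) x := by
  set g := fun y => (exp y * F y - (exp y + c) * deriv F y) / W y
  have hg : ∀ x, HasDerivAt g (Ψ x * exp x * f_b x) x := fun x => by
    simpa only [hΨ, hfb] using hF.hasDerivAt_div_wronskian hσ (hW x) (hWpos x).ne'
  have hg_atBot : Tendsto g atBot (𝓝 0) := by
    refine tendsto_div_of_antitoneOn_Iic ?_
      (antitoneOn_Iic_of_hasDerivAt_eq_mul (by positivity) hW hWpos) (hWpos θ)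
    simpa using (tendsto_exp_atBot.mul hF_atBot).sub
      ((tendsto_exp_atBot.add_const c).mul hF'_atBot)
  have hΨc : Continuous Ψ := by
    have hFc : Continuous F := continuous_iff_continuousAt.2 fun x => (hF x).1.continuousAt
    have hWc : Continuous W := continuous_iff_continuousAt.2 fun x => (hW x).continuousAt
    rw [funext hΨ]
    fun_prop (disch := exact fun x => mul_ne_zero (pow_ne_zero 2 hσ) (hWpos x).ne')
  have hint : ∀ x, IntegrableOn (fun s => Ψ s * exp s * f_b s) (Iic x) := by
    simp only [hfb] at hg ⊢
    exact integrableOn_Iic_mul_exp_mul_of_hasDerivAt hrc hΨc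
      (fun x => by rw [hΨ]; have := hFpos x; have := hWpos x; positivity) hg hg_atBot
  refine ⟨hint, fun x => ?_⟩
  rw [integral_Iic_of_hasDerivAt_of_tendsto' (fun s _ => hg s) (hint x) hg_atBot, sub_zero]
  refine (((hasDerivAt_exp x).add_const c).div (hF x).1 (hFpos x).ne').congr_deriv ?_
  simp only [g]
  field_simp [(hWpos x).ne']

theorem stmt7_general
    (μ σ θ r c_b : ℝ)
    (hμ : 0 < μ) (hσ : 0 < σ) (hr : 0 < r) (hcb : 0 < c_b)
    (F G : ℝ → ℝ)
    (hF : ∀ x : ℝ, F x = ∫ u in Ioi (0:ℝ),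
        u ^ (r / μ - 1) * Real.exp (Real.sqrt (2 * μ / σ ^ 2) * (x - θ) * u - u ^ 2 / 2))
    (hG : ∀ x : ℝ, G x = ∫ u in Ioi (0:ℝ),
        u ^ (r / μ - 1) * Real.exp (Real.sqrt (2 * μ / σ ^ 2) * (θ - x) * u - u ^ 2 / 2))
    (f_b : ℝ → ℝ)
    (hfb : ∀ x : ℝ, f_b x = (μ * θ + σ ^ 2 / 2 - r) - μ * x - r * c_b * Real.exp (-x))
    (W Ψ : ℝ → ℝ)
    (hW : ∀ x, W x = deriv F x * G x - F x * deriv G x)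
    (hWpos : ∀ x, 0 < W x)
    (hΨ : ∀ x, Ψ x = 2 * F x / (σ ^ 2 * W x)) :
    (∀ x : ℝ, IntegrableOn (fun s => Ψ s * Real.exp s * f_b s) (Iic x)) ∧
    (∀ x : ℝ, HasDerivAt (fun y => (Real.exp y + c_b) / F y)
      (W x / (F x) ^ 2 * ∫ s in Iic x, Ψ s * Real.exp s * f_b s) x) := by
  set k := √(2 * μ / σ ^ 2)
  have hk : 0 < k := sqrt_pos.2 (by positivity)
  have hk2 : k ^ 2 = 2 * μ / σ ^ 2 := sq_sqrt (by positivity)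
  have hq : -1 < r / μ - 1 := by linarith [div_pos hr hμ]
  have hFJ : F = fun x => tiltedGaussianMoment (r / μ - 1) (k * (x - θ)) := funext hF
  have hGJ : G = fun x => tiltedGaussianMoment (r / μ - 1) (-k * (x - θ)) := by
    ext x
    rw [hG, tiltedGaussianMoment, show -k * (x - θ) = k * (θ - x) by ring]
  have hFode : SolvesOUEquation μ σ θ r F := hFJ ▸ solvesOUEquation_tiltedGaussianMoment hμ hr hk2
  have hGode : SolvesOUEquation μ σ θ r G :=
    hGJ ▸ solvesOUEquation_tiltedGaussianMoment hμ hr ((neg_sq k).trans hk2)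
  have hWd : ∀ x, HasDerivAt W (2 * μ / σ ^ 2 * (x - θ) * W x) x := by
    simpa only [← funext hW, ← hW] using hFode.hasDerivAt_wronskian hGode
  exact hFode.integrableOn_Iic_and_hasDerivAt_exp_add_div hμ.le hσ.ne' (mul_pos hr hcb)
    (fun x => hFJ ▸ tiltedGaussianMoment.pos hq _)
    (hFJ ▸ tiltedGaussianMoment.tendsto_comp_affine_atBot hq hk θ)
    (hFJ ▸ tiltedGaussianMoment.tendsto_deriv_comp_affine_atBot hq hk θ) hWd hWpos hΨ hfb

/-- For every x, the derivative of x ↦ (e^x + c_b)/F(x) equals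
(W(x)/F(x)²)·∫_{−∞}^x Ψ(s)·e^s·f_b(s) ds, where the integral converges. -/
theorem stmt7
    (μ σ θ r c_s c_b : ℝ)
    (hμ : 0 < μ) (hσ : 0 < σ) (hr : 0 < r) (hcs : 0 < c_s) (hcb : 0 < c_b)
    (F G : ℝ → ℝ)
    (hF : ∀ x : ℝ, F x = ∫ u in Ioi (0:ℝ),
        u ^ (r / μ - 1) * Real.exp (Real.sqrt (2 * μ / σ ^ 2) * (x - θ) * u - u ^ 2 / 2))
    (hG : ∀ x : ℝ, G x = ∫ u in Ioi (0:ℝ),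
        u ^ (r / μ - 1) * Real.exp (Real.sqrt (2 * μ / σ ^ 2) * (θ - x) * u - u ^ 2 / 2))
    (f_b : ℝ → ℝ)
    (hfb : ∀ x : ℝ, f_b x = (μ * θ + σ ^ 2 / 2 - r) - μ * x - r * c_b * Real.exp (-x))
    (W Ψ : ℝ → ℝ)
    (hW : ∀ x, W x = deriv F x * G x - F x * deriv G x)
    (hWpos : ∀ x, 0 < W x)
    (hΨ : ∀ x, Ψ x = 2 * F x / (σ ^ 2 * W x)) :
    (∀ x : ℝ, IntegrableOn (fun s => Ψ s * Real.exp s * f_b s) (Iic x)) ∧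
    (∀ x : ℝ, HasDerivAt (fun y => (Real.exp y + c_b) / F y)
      (W x / (F x) ^ 2 * ∫ s in Iic x, Ψ s * Real.exp s * f_b s) x) :=
  stmt7_general μ σ θ r c_b hμ hσ hr hcb F G hF hG f_b hfb W Ψ hW hWpos hΨ
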